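/- arXiv:1912.10304 — 6 statements merged into one kernel-verified Lean document; each statement's English description precedes it below -/
import Mathlib

section
/- Let d ≥ 2 be an integer. Then lim_{t → 0⁺} s₁(t) / t^{(d−1)/2} = (κ_{d−1}/(d·κ_d)) · 2^{(d−1)/2}. -/
open MeasureTheory Real Filter

/-- `kappa j` is the Lebesgue volume of the unit ball in `ℝ^j`. -/
noncomputable def kappa (j : ℕ) : ℝ :=
  (volume (Metric.ball (0 : EuclideanSpace ℝ (Fin j)) 1)).toReal

/-- Normalized surface area `s₁` of a spherical cap of height `h` (equals `1` for `h > 2`). -/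
noncomputable def s1 (d : ℕ) (h : ℝ) : ℝ :=
  if h ≤ 2 then
    (((d : ℝ) - 1) * kappa (d - 1) / ((d : ℝ) * kappa d)) *
      ∫ θ in (0:ℝ)..(Real.arccos (1 - h)), (Real.sin θ) ^ (d - 2)
  else 1

/-! Put `x = arccos (1 - t)`, so that `t = 1 - cos x` and `x → 0⁺` as `t → 0⁺`. Then
`s₁(t) / t ^ ((d - 1) / 2) = C · (∫₀ˣ sin ^ (d - 2)) / x ^ (d - 1) · (x² / (1 - cos x)) ^ ((d - 1) / 2)`
with `C = (d - 1) κ_{d-1} / (d κ_d)`. On `[0, x]` we have `θ cos x ≤ sin θ ≤ θ`, which squeezes the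
middle factor to `1 / (d - 1)`, and `1 - cos x ~ x² / 2` sends the last factor to `2 ^ ((d - 1) / 2)`. -/

open Topology intervalIntegral

theorem integral_sin_pow_le (n : ℕ) {x : ℝ} (hx : 0 ≤ x) :
    ∫ θ in 0..x, sin θ ^ n ≤ x ^ (n + 1) / (n + 1) := by
  calc ∫ θ in 0..x, sin θ ^ n ≤ ∫ θ in 0..x, θ ^ n := by
        refine integral_mono_on hx (Continuous.intervalIntegrable (by fun_prop) _ _)
          (Continuous.intervalIntegrable (by fun_prop) _ _) fun θ hθ => ?_
        calc sin θ ^ n ≤ |sin θ| ^ n := (le_abs_self _).trans_eq (abs_pow _ _)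
          _ ≤ θ ^ n := pow_le_pow_left₀ (abs_nonneg _)
              (abs_sin_le_abs.trans_eq (abs_of_nonneg hθ.1)) n
    _ = x ^ (n + 1) / (n + 1) := by simp [integral_pow]

theorem mul_cos_le_sin {θ : ℝ} (hθ₀ : 0 ≤ θ) (hθ : θ < π / 2) : θ * cos θ ≤ sin θ := by
  have hcos : 0 < cos θ := cos_pos_of_mem_Ioo ⟨by linarith, hθ⟩
  simpa [tan_eq_sin_div_cos, le_div_iff₀ hcos] using le_tan hθ₀ hθ

theorem cos_pow_mul_le_integral_sin_pow (n : ℕ) {x : ℝ} (hx₀ : 0 ≤ x) (hx : x < π / 2) :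
    cos x ^ n * (x ^ (n + 1) / (n + 1)) ≤ ∫ θ in 0..x, sin θ ^ n := by
  calc cos x ^ n * (x ^ (n + 1) / (n + 1)) = ∫ θ in 0..x, (θ * cos x) ^ n := by
        simp [mul_pow, integral_pow, mul_comm]
    _ ≤ ∫ θ in 0..x, sin θ ^ n := by
        refine integral_mono_on hx₀ (Continuous.intervalIntegrable (by fun_prop) _ _)
          (Continuous.intervalIntegrable (by fun_prop) _ _) fun θ hθ => ?_
        have hcos : cos x ≤ cos θ := cos_le_cos_of_nonneg_of_le_pi hθ.1 (by linarith) hθ.2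
        refine pow_le_pow_left₀ (mul_nonneg hθ.1 (cos_nonneg_of_mem_Icc ⟨by linarith, hx.le⟩)) ?_ n
        exact (mul_le_mul_of_nonneg_left hcos hθ.1).trans
          (mul_cos_le_sin hθ.1 (hθ.2.trans_lt hx))

theorem tendsto_integral_sin_pow_div_pow (n : ℕ) :
    Tendsto (fun x => (∫ θ in 0..x, sin θ ^ n) / x ^ (n + 1)) (𝓝[>] 0) (𝓝 (1 / (n + 1))) := by
  have hcos : Tendsto (fun x => cos x ^ n / (n + 1)) (𝓝[>] 0) (𝓝 (1 / (n + 1))) := by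
    refine ((continuous_cos.pow n).div_const _).tendsto' 0 _ ?_ |>.mono_left nhdsWithin_le_nhds
    simp
  have hsmall : ∀ᶠ x in 𝓝[>] (0 : ℝ), x ∈ Set.Ioo 0 (π / 2) :=
    Ioo_mem_nhdsGT (by positivity)
  refine tendsto_of_tendsto_of_tendsto_of_le_of_le' hcos tendsto_const_nhds ?_ ?_
  · filter_upwards [hsmall] with x hx
    rw [le_div_iff₀ (pow_pos hx.1 _)]
    calc cos x ^ n / (n + 1) * x ^ (n + 1) = cos x ^ n * (x ^ (n + 1) / (n + 1)) := by ring
      _ ≤ _ := cos_pow_mul_le_integral_sin_pow n hx.1.le hx.2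
  · filter_upwards [hsmall] with x hx
    rw [div_le_iff₀ (pow_pos hx.1 _)]
    calc _ ≤ x ^ (n + 1) / (n + 1) := integral_sin_pow_le n hx.1.le
      _ = 1 / (n + 1) * x ^ (n + 1) := by ring

theorem tendsto_one_sub_cos_div_sq :
    Tendsto (fun x => (1 - cos x) / x ^ 2) (𝓝[≠] 0) (𝓝 (1 / 2)) := by
  have hlow : Tendsto (fun x : ℝ => 1 / 2 - 5 / 96 * x ^ 2) (𝓝[≠] 0) (𝓝 (1 / 2)) := by
    refine (Continuous.tendsto' (by fun_prop) 0 _ ?_).mono_left nhdsWithin_le_nhds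
    simp
  have hsmall : ∀ᶠ x in 𝓝[≠] (0 : ℝ), x ∈ Set.Icc (-1) 1 ∧ x ≠ 0 :=
    (eventually_nhdsWithin_of_eventually_nhds (Icc_mem_nhds (by norm_num) (by norm_num))).and
      self_mem_nhdsWithin
  refine tendsto_of_tendsto_of_tendsto_of_le_of_le' hlow tendsto_const_nhds ?_ ?_
  · filter_upwards [hsmall] with x ⟨hx₁, hx₀⟩
    have hcos := (abs_le.1 (cos_bound (abs_le.2 hx₁))).2
    rw [pow_abs, abs_of_nonneg (by positivity : (0 : ℝ) ≤ x ^ 4)] at hcos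
    rw [le_div_iff₀ (by positivity)]
    nlinarith
  · filter_upwards [hsmall] with x ⟨_, hx₀⟩
    rw [div_le_iff₀ (by positivity)]
    linarith [one_sub_sq_div_two_le_cos (x := x)]

theorem tendsto_sq_div_one_sub_cos :
    Tendsto (fun x => x ^ 2 / (1 - cos x)) (𝓝[≠] 0) (𝓝 2) := by
  simpa using tendsto_one_sub_cos_div_sq.inv₀ (by norm_num)

theorem tendsto_arccos_one_sub :
    Tendsto (fun t => arccos (1 - t)) (𝓝[>] 0) (𝓝[>] 0) := by
  refine tendsto_nhdsWithin_iff.2 ⟨?_, ?_⟩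
  · refine (Continuous.tendsto' (by fun_prop) 0 _ ?_).mono_left nhdsWithin_le_nhds
    simp [arccos_one]
  · filter_upwards [self_mem_nhdsWithin] with t (ht : 0 < t)
    exact arccos_pos.2 (by linarith)

theorem sq_rpow_half_succ {x : ℝ} (hx : 0 ≤ x) (n : ℕ) :
    (x ^ 2) ^ (((n : ℝ) + 1) / 2) = x ^ (n + 1) := by
  rw [← rpow_natCast_mul hx, ← rpow_natCast]
  push_cast
  ring_nf

theorem div_pow_succ_mul_sq_div_rpow (a : ℝ) {x t : ℝ} (hx : 0 < x) (ht : 0 ≤ t) (n : ℕ) :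
    a / x ^ (n + 1) * (x ^ 2 / t) ^ (((n : ℝ) + 1) / 2) = a / t ^ (((n : ℝ) + 1) / 2) := by
  rw [div_rpow (sq_nonneg x) ht, sq_rpow_half_succ hx.le]
  field_simp

/-- `s₁(t) ~ (κ_{d-1}/(d κ_d)) (2t)^{(d-1)/2}` as `t → 0⁺`. -/
theorem s1_asymptotics (d : ℕ) (hd : 2 ≤ d) :
    Tendsto (fun t : ℝ => s1 d t / t ^ (((d : ℝ) - 1) / 2))
      (nhdsWithin 0 (Set.Ioi 0))
      (nhds (kappa (d - 1) / ((d : ℝ) * kappa d) * (2 : ℝ) ^ (((d : ℝ) - 1) / 2))) := by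
  obtain ⟨n, rfl⟩ : ∃ n, d = n + 2 := ⟨d - 2, by omega⟩
  have hn : ((n + 2 : ℕ) : ℝ) - 1 = n + 1 := by push_cast; ring
  simp only [hn, show n + 2 - 1 = n + 1 by omega]
  set C := ((n : ℝ) + 1) * kappa (n + 1) / ((n + 2 : ℕ) * kappa (n + 2))
  set p := ((n : ℝ) + 1) / 2
  have hlim := (((tendsto_integral_sin_pow_div_pow n).mul
      ((tendsto_sq_div_one_sub_cos.mono_left (nhdsGT_le_nhdsNE 0)).rpow_const (p := p)
        (Or.inl two_ne_zero))).comp tendsto_arccos_one_sub).const_mul C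
  have hC : C * (1 / (n + 1) * 2 ^ p) = kappa (n + 1) / ((n + 2 : ℕ) * kappa (n + 2)) * 2 ^ p := by
    simp only [C]
    field_simp
  rw [hC] at hlim
  refine hlim.congr' ?_
  filter_upwards [Ioo_mem_nhdsGT (show (0 : ℝ) < 2 by norm_num)] with t ht
  have hx : 0 < arccos (1 - t) := arccos_pos.2 (by linarith [ht.1])
  have hcos : 1 - cos (arccos (1 - t)) = t := by
    rw [cos_arccos (by linarith [ht.2]) (by linarith [ht.1])]; ring
  have hs1 : s1 (n + 2) t = C * ∫ θ in 0..arccos (1 - t), sin θ ^ n := by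
    simp only [s1, if_pos ht.2.le, hn, show n + 2 - 1 = n + 1 by omega, Nat.add_sub_cancel, C]
  rw [Function.comp_apply, hcos, hs1, div_pow_succ_mul_sq_div_rpow _ hx ht.1.le, mul_div_assoc]
end

section
/- Let d ≥ 2 be an integer. For every t ∈ [0,2], (κ_{d−1}/(2·π^{d−2}·d·κ_d)) · (2t)^{(d−1)/2} ≤ s₁(t) ≤ (κ_{d−1}/(d·κ_d)) · (8t)^{(d−1)/2}. -/
/-!
With `n = d - 2` and `α = arccos (1 - t)`, `s₁(t)` is a positive multiple of
`(n + 1) ∫₀^α sin θ ^ n dθ`. From above, `sin θ ≤ θ` bounds this by `α ^ (n + 1)`, and Jordan's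
inequality `cos α ≤ 1 - 2α²/π²` gives `α² ≤ π² t / 2 ≤ 8 t`. From below, `sin θ ^ n cos θ ≤ sin θ ^ n`
bounds it by `sin b ^ (n + 1)` for every `b ≤ α`; the choice `b = arccos (1 - t/2)` has
`sin² b = (t/2)(2 - t/2) ≥ t/2`, which survives up to `t = 2`, where `sin α = 0`; finally
`2 ^ n ≤ π ^ n`.
-/

open MeasureTheory Real Filter

open Set

lemma kappa_pos (j : ℕ) : 0 < kappa j :=
  ENNReal.toReal_pos (Metric.measure_ball_pos volume 0 one_pos).ne' measure_ball_lt_top.ne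

namespace Real

lemma sq_arccos_one_sub_le {t : ℝ} (ht0 : 0 ≤ t) (ht2 : t ≤ 2) :
    arccos (1 - t) ^ 2 ≤ π ^ 2 / 2 * t := by
  have hjordan := cos_le_one_sub_mul_cos_sq (x := arccos (1 - t))
    (by rw [abs_of_nonneg (arccos_nonneg _)]; exact arccos_le_pi _)
  rw [cos_arccos (by linarith) (by linarith)] at hjordan
  have h : 2 / π ^ 2 * arccos (1 - t) ^ 2 ≤ t := by linarith
  rw [div_mul_eq_mul_div, div_le_iff₀ (by positivity)] at h
  linarith

lemma sin_arccos_one_sub_sq {s : ℝ} (hs0 : 0 ≤ s) (hs2 : s ≤ 2) :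
    sin (arccos (1 - s)) ^ 2 = s * (2 - s) := by
  rw [sin_arccos, sq_sqrt (by nlinarith)]
  ring

lemma integral_sin_pow_le (n : ℕ) {b : ℝ} (hb : 0 ≤ b) :
    (n + 1) * ∫ θ in (0 : ℝ)..b, sin θ ^ n ≤ b ^ (n + 1) := by
  have hmono : ∫ θ in (0 : ℝ)..b, sin θ ^ n ≤ ∫ θ in (0 : ℝ)..b, θ ^ n :=
    intervalIntegral.integral_mono_on hb ((continuous_sin.pow n).intervalIntegrable _ _)
      ((continuous_pow n).intervalIntegrable _ _) fun θ hθ =>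
      calc sin θ ^ n ≤ |sin θ| ^ n := (le_abs_self _).trans (abs_pow _ _).le
        _ ≤ θ ^ n := by
          gcongr
          exact abs_sin_le_abs.trans (abs_of_nonneg hθ.1).le
  rw [integral_pow] at hmono
  rw [zero_pow n.succ_ne_zero, sub_zero] at hmono
  rwa [le_div_iff₀' (by positivity)] at hmono

lemma sin_pow_succ_le_integral_sin_pow (n : ℕ) {a b : ℝ} (hb : 0 ≤ b) (hba : b ≤ a)
    (ha : a ≤ π) : sin b ^ (n + 1) ≤ (n + 1) * ∫ θ in (0 : ℝ)..a, sin θ ^ n := by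
  have hsin : ∀ θ ∈ Icc 0 a, 0 ≤ sin θ := fun θ hθ =>
    sin_nonneg_of_nonneg_of_le_pi hθ.1 (hθ.2.trans ha)
  have hprimitive : ∫ θ in (0 : ℝ)..b, sin θ ^ n * cos θ = sin b ^ (n + 1) / (n + 1) := by
    simpa using integral_sin_pow_mul_cos_pow_odd (a := 0) (b := b) n 0
  have hcos : ∫ θ in (0 : ℝ)..b, sin θ ^ n * cos θ ≤ ∫ θ in (0 : ℝ)..b, sin θ ^ n :=
    intervalIntegral.integral_mono_on hb
      (((continuous_sin.pow n).mul continuous_cos).intervalIntegrable _ _)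
      ((continuous_sin.pow n).intervalIntegrable _ _) fun θ hθ =>
      mul_le_of_le_one_right (pow_nonneg (hsin θ ⟨hθ.1, hθ.2.trans hba⟩) n) (cos_le_one θ)
  have hinterval : ∫ θ in (0 : ℝ)..b, sin θ ^ n ≤ ∫ θ in (0 : ℝ)..a, sin θ ^ n :=
    intervalIntegral.integral_mono_interval le_rfl hb hba
      (ae_restrict_of_forall_mem measurableSet_Ioc fun θ hθ =>
        pow_nonneg (hsin θ (Ioc_subset_Icc_self hθ)) n)
      ((continuous_sin.pow n).intervalIntegrable _ _)
  rw [hprimitive, div_le_iff₀' (by positivity)] at hcos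
  nlinarith

lemma sqrt_two_mul_pow_div_le_integral_sin_pow_arccos (n : ℕ) {t : ℝ} (ht0 : 0 ≤ t) (ht2 : t ≤ 2) :
    √(2 * t) ^ (n + 1) / (2 * π ^ n) ≤ (n + 1) * ∫ θ in (0 : ℝ)..arccos (1 - t), sin θ ^ n := by
  set b := arccos (1 - t / 2)
  have hsin : √(2 * t) / 2 ≤ sin b := by
    have hsq := sin_arccos_one_sub_sq (s := t / 2) (by linarith) (by linarith)
    have hnonneg := sin_nonneg_of_nonneg_of_le_pi (arccos_nonneg (1 - t / 2)) (arccos_le_pi _)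
    rw [div_le_iff₀ two_pos, sqrt_le_iff]
    exact ⟨by positivity, by nlinarith⟩
  calc √(2 * t) ^ (n + 1) / (2 * π ^ n) ≤ √(2 * t) ^ (n + 1) / 2 ^ (n + 1) := by
        rw [pow_succ' 2]
        gcongr
        exact two_le_pi
    _ = (√(2 * t) / 2) ^ (n + 1) := (div_pow _ _ _).symm
    _ ≤ sin b ^ (n + 1) := by gcongr
    _ ≤ _ := sin_pow_succ_le_integral_sin_pow n (arccos_nonneg _)
        (arccos_le_arccos (by linarith)) (arccos_le_pi _)

lemma integral_sin_pow_arccos_le (n : ℕ) {t : ℝ} (ht0 : 0 ≤ t) (ht2 : t ≤ 2) :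
    (n + 1) * ∫ θ in (0 : ℝ)..arccos (1 - t), sin θ ^ n ≤ √(8 * t) ^ (n + 1) := by
  have hα : arccos (1 - t) ≤ √(8 * t) := by
    rw [le_sqrt (arccos_nonneg _) (by positivity)]
    have hπ : π ^ 2 ≤ 16 := by nlinarith [pi_pos, pi_le_four]
    nlinarith [sq_arccos_one_sub_le ht0 ht2]
  exact (integral_sin_pow_le n (arccos_nonneg _)).trans (pow_le_pow_left₀ (arccos_nonneg _) hα _)

end Real

/-- two-sided bounds for `s₁(t)` on `[0,2]`. -/
theorem s1_bounds (d : ℕ) (hd : 2 ≤ d) (t : ℝ) (ht0 : 0 ≤ t) (ht2 : t ≤ 2) :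
    kappa (d - 1) / (2 * π ^ (d - 2) * ((d : ℝ) * kappa d)) * (2 * t) ^ (((d : ℝ) - 1) / 2)
        ≤ s1 d t ∧
      s1 d t ≤ kappa (d - 1) / ((d : ℝ) * kappa d) * (8 * t) ^ (((d : ℝ) - 1) / 2) := by
  obtain ⟨n, rfl⟩ : ∃ n, d = n + 2 := ⟨d - 2, by omega⟩
  set I := (n + 1 : ℝ) * ∫ θ in (0 : ℝ)..arccos (1 - t), sin θ ^ n
  set c := kappa (n + 1) / (((n + 2 : ℕ) : ℝ) * kappa (n + 2))
  have hc : 0 < c := by have := kappa_pos (n + 1); have := kappa_pos (n + 2); positivity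
  have hs1 : s1 (n + 2) t = c * I := by
    simp only [s1, if_pos ht2, Nat.add_sub_cancel, c, I]
    push_cast
    ring
  have hexp : (((n + 2 : ℕ) : ℝ) - 1) / 2 = ((n + 1 : ℕ) : ℝ) / 2 := by push_cast; ring
  simp only [Nat.add_sub_cancel, hs1, hexp, rpow_div_two_eq_sqrt _ (by positivity : (0 : ℝ) ≤ 2 * t),
    rpow_div_two_eq_sqrt _ (by positivity : (0 : ℝ) ≤ 8 * t), rpow_natCast]
  constructor
  · calc kappa (n + 1) / (2 * π ^ n * (((n + 2 : ℕ) : ℝ) * kappa (n + 2))) * √(2 * t) ^ (n + 1)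
        = c * (√(2 * t) ^ (n + 1) / (2 * π ^ n)) := by simp only [c]; field_simp
      _ ≤ c * I := by gcongr; exact sqrt_two_mul_pow_div_le_integral_sin_pow_arccos n ht0 ht2
  · exact mul_le_mul_of_nonneg_left (integral_sin_pow_arccos_le n ht0 ht2) hc.le
end

section
/- Let d ≥ 2 be an integer. For every φ ∈ [0, π], ∫₀^φ (sin θ)^{d−2} dθ ≥ φ^{d−1} / (2 · π^{d−2} · (d−1)). -/
/-!
Integrate only over `[0, φ/2] ⊆ [0, π/2]`, where Jordan's inequality `sin θ ≥ 2θ/π` holds: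
`∫₀^{φ/2} (2θ/π)^n dθ = (2/π)^n (φ/2)^{n+1}/(n+1)` is exactly the claimed bound.
-/

open Real

theorem two_div_pi_pow_mul_le_integral_sin_pow (n : ℕ) {a : ℝ} (ha₀ : 0 ≤ a) (ha : a ≤ π / 2) :
    (2 / π) ^ n * (a ^ (n + 1) / (n + 1)) ≤ ∫ θ in (0:ℝ)..a, sin θ ^ n := by
  have hjordan : ∫ θ in (0:ℝ)..a, (2 / π * θ) ^ n ≤ ∫ θ in (0:ℝ)..a, sin θ ^ n :=
    intervalIntegral.integral_mono_on ha₀ ((by fun_prop : Continuous _).intervalIntegrable _ _)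
      ((by fun_prop : Continuous _).intervalIntegrable _ _) fun θ hθ =>
      pow_le_pow_left₀ (mul_nonneg (by positivity) hθ.1) (mul_le_sin hθ.1 (hθ.2.trans ha)) n
  simpa [mul_pow, integral_pow] using hjordan

theorem integral_sin_pow_mono {n : ℕ} {a b : ℝ} (ha₀ : 0 ≤ a) (hab : a ≤ b) (hb : b ≤ π) :
    ∫ θ in (0:ℝ)..a, sin θ ^ n ≤ ∫ θ in (0:ℝ)..b, sin θ ^ n := by
  refine intervalIntegral.integral_mono_interval le_rfl ha₀ hab ?_
    ((by fun_prop : Continuous _).intervalIntegrable _ _)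
  filter_upwards [MeasureTheory.ae_restrict_mem measurableSet_Ioc] with θ hθ
  exact pow_nonneg (sin_nonneg_of_nonneg_of_le_pi hθ.1.le (hθ.2.trans hb)) n

/-- for `φ ∈ [0,π]`, `∫₀^φ sin^{d-2} θ dθ ≥ φ^{d-1}/(2 π^{d-2} (d-1))`. -/
theorem integral_sin_pow_lower_bound (d : ℕ) (hd : 2 ≤ d) (p : ℝ) (hp0 : 0 ≤ p) (hpπ : p ≤ π) :
    p ^ (d - 1) / (2 * π ^ (d - 2) * ((d : ℝ) - 1)) ≤
      ∫ θ in (0:ℝ)..p, (Real.sin θ) ^ (d - 2) := by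
  obtain ⟨n, rfl⟩ := Nat.exists_eq_add_of_le' hd
  have hexp : n + 2 - 1 = n + 1 := rfl
  have hcast : ((n + 2 : ℕ) : ℝ) - 1 = n + 1 := by push_cast; ring
  have hbound : p ^ (n + 1) / (2 * π ^ n * ((n : ℝ) + 1)) =
      (2 / π) ^ n * ((p / 2) ^ (n + 1) / (n + 1)) := by
    have := pi_pos
    rw [div_pow, div_pow, pow_succ]
    field_simp
    ring
  rw [hexp, Nat.add_sub_cancel, hcast, hbound]
  calc (2 / π) ^ n * ((p / 2) ^ (n + 1) / (n + 1))
      ≤ ∫ θ in (0:ℝ)..p / 2, sin θ ^ n :=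
        two_div_pi_pow_mul_le_integral_sin_pow n (by positivity) (by linarith)
    _ ≤ ∫ θ in (0:ℝ)..p, sin θ ^ n := integral_sin_pow_mono (by positivity) (by linarith) hpπ
end

section
/- Let d ≥ 2 be an integer and ρ > 0. Let σ denote the uniform probability measure on the unit sphere S^{d−1} ⊂ ℝ^d (the restriction of the (d−1)-dimensional Hausdorff measure H^{d−1} to S^{d−1}, normalized to total mass 1), and let ν denote the uniform probability measure on the closed ball B̄(0,ρ) ⊂ ℝ^d (Lebesgue measure restricted to B̄(0,ρ), normalized by κ_d ρ^d). Then the pushforward of the product measure σ ⊗ ν under the addition map (x,e) ↦ x + e is absolutely continuous with respect to Lebesgue measure on ℝ^d, with density x ↦ H^{d−1}( B̄(x,ρ) ∩ S^{d−1} ) / (d · κ_d² · ρ^d); that is, for every Borel set A ⊆ ℝ^d, (σ ⊗ ν)({(x,e) : x + e ∈ A}) = (1/(d · κ_d² · ρ^d)) · ∫_A H^{d−1}( B̄(x,ρ) ∩ S^{d−1} ) dx. -/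
/-!
Tonelli's theorem and the invariance of Lebesgue measure under the shear `(x, e) ↦ (x, x + e)`
give `(σ ⊗ vol|B̄(0,ρ)) {x + e ∈ A} = ∫_A σ(B̄(y, ρ)) dy` for any s-finite `σ`; the constants then
only have to be collected. Tonelli needs `H^{d-1}(S^{d-1}) < ∞`: the sphere is covered by two closed
hemispheres, each the image of a compact disc under an inverse stereographic projection, which is
`C¹` and hence Lipschitz on compact sets.
-/

open MeasureTheory Real Filter

open Measure Metric Module
open scoped RealInnerProductSpace ENNReal

theorem ContDiff.hausdorffMeasure_image_lt_top {F E : Type*}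
    [NormedAddCommGroup F] [NormedSpace ℝ F] [FiniteDimensional ℝ F]
    [MeasurableSpace F] [BorelSpace F]
    [NormedAddCommGroup E] [NormedSpace ℝ E] [MeasurableSpace E] [BorelSpace E]
    {f : F → E} (hf : ContDiff ℝ 1 f) {K : Set F} (hK : IsCompact K) :
    μH[finrank ℝ F] (f '' K) < ⊤ := by
  obtain ⟨C, hC⟩ := hf.locallyLipschitz.locallyLipschitzOn.exists_lipschitzOnWith_of_compact hK
  calc μH[finrank ℝ F] (f '' K) ≤ (C : ℝ≥0∞) ^ (finrank ℝ F : ℝ) * μH[finrank ℝ F] K :=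
        hC.hausdorffMeasure_image_le (Nat.cast_nonneg _)
    _ < ⊤ := ENNReal.mul_lt_top (by simp) hK.measure_lt_top

section Sphere

variable {E : Type*} [NormedAddCommGroup E] [InnerProductSpace ℝ E]

theorem mem_image_stereoInvFunAux_closedBall {v x : E} (hv : ‖v‖ = 1) (hx : ‖x‖ = 1)
    (hvx : ⟪v, x⟫ ≤ 0) :
    x ∈ (fun w : (ℝ ∙ v)ᗮ ↦ stereoInvFunAux v (w : E)) '' closedBall 0 2 := by
  have hxv : x ≠ v := by
    rintro rfl
    norm_num [hx] at hvx
  refine ⟨stereoToFun v x, ?_, congrArg Subtype.val (stereo_left_inv hv (x := ⟨x, by simpa⟩) hxv)⟩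
  have hscale : 0 < 2 / (1 - ⟪v, x⟫) ∧ 2 / (1 - ⟪v, x⟫) ≤ 2 := by
    constructor
    · apply div_pos <;> linarith
    · rw [div_le_iff₀ (by linarith)]; linarith
  rw [mem_closedBall_zero_iff, stereoToFun_apply, innerSL_apply_apply, norm_smul,
    Real.norm_of_nonneg hscale.1.le]
  calc 2 / (1 - ⟪v, x⟫) * ‖(ℝ ∙ v)ᗮ.orthogonalProjectionOnto x‖ ≤ 2 * ‖x‖ := by
        gcongr
        · exact hscale.2
        · exact (ℝ ∙ v)ᗮ.norm_orthogonalProjectionOnto_apply_le x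
    _ = 2 := by rw [hx, mul_one]

theorem hausdorffMeasure_image_stereoInvFunAux_closedBall_lt_top [FiniteDimensional ℝ E]
    [MeasurableSpace E] [BorelSpace E] {n : ℕ} (hE : finrank ℝ E = n + 1) {v : E} (hv : v ≠ 0)
    (r : ℝ) : μH[n] ((fun w : (ℝ ∙ v)ᗮ ↦ stereoInvFunAux v (w : E)) '' closedBall 0 r) < ⊤ := by
  have : Fact (finrank ℝ E = n + 1) := ⟨hE⟩
  have hf : ContDiff ℝ 1 fun w : (ℝ ∙ v)ᗮ ↦ stereoInvFunAux v (w : E) :=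
    contDiff_stereoInvFunAux.comp (ℝ ∙ v)ᗮ.subtypeL.contDiff
  have h := hf.hausdorffMeasure_image_lt_top (isCompact_closedBall 0 r)
  rwa [Submodule.finrank_orthogonal_span_singleton (n := n) hv] at h

theorem hausdorffMeasure_sphere_lt_top [FiniteDimensional ℝ E] [MeasurableSpace E]
    [BorelSpace E] : μH[(finrank ℝ E : ℝ) - 1] (sphere (0 : E) 1) < ⊤ := by
  rcases hE : finrank ℝ E with _ | n
  · have : Subsingleton E := finrank_zero_iff.mp hE
    simp [sphere_eq_empty_of_subsingleton one_ne_zero]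
  have : Nontrivial E := (finrank_pos_iff (R := ℝ)).mp (by omega)
  obtain ⟨v, hv⟩ := (NormedSpace.sphere_nonempty (x := (0 : E)) (r := 1)).mpr zero_le_one
  rw [mem_sphere_zero_iff_norm] at hv
  have hv0 : v ≠ 0 := norm_ne_zero_iff.mp (by simp [hv])
  have hcover : sphere (0 : E) 1 ⊆
      (fun w : (ℝ ∙ v)ᗮ ↦ stereoInvFunAux v (w : E)) '' closedBall 0 2 ∪
        (fun w : (ℝ ∙ -v)ᗮ ↦ stereoInvFunAux (-v) (w : E)) '' closedBall 0 2 := by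
    intro x hx
    rw [mem_sphere_zero_iff_norm] at hx
    rcases le_total ⟪v, x⟫ 0 with hvx | hvx
    · exact .inl (mem_image_stereoInvFunAux_closedBall hv hx hvx)
    · exact .inr (mem_image_stereoInvFunAux_closedBall (by simpa) hx (by simpa [inner_neg_left]))
  push_cast
  rw [add_sub_cancel_right]
  exact (measure_mono hcover).trans_lt <| (measure_union_le _ _).trans_lt <| ENNReal.add_lt_top.mpr
    ⟨hausdorffMeasure_image_stereoInvFunAux_closedBall_lt_top hE hv0 2,
      hausdorffMeasure_image_stereoInvFunAux_closedBall_lt_top hE (neg_ne_zero.mpr hv0) 2⟩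

end Sphere

theorem prod_restrict_closedBall_add_mem_eq_lintegral {E : Type*} [NormedAddCommGroup E]
    [MeasurableSpace E] [BorelSpace E] [SecondCountableTopology E] (μ ν : Measure E) [SFinite μ]
    [SFinite ν] [ν.IsAddLeftInvariant] (ρ : ℝ) {A : Set E} (hA : MeasurableSet A) :
    μ.prod (ν.restrict (closedBall 0 ρ)) {p | p.1 + p.2 ∈ A} =
      ∫⁻ y in A, μ (closedBall y ρ) ∂ν := by
  set T : Set (E × E) := {p | p.2 ∈ A ∧ p.1 ∈ closedBall p.2 ρ}
  have hT : MeasurableSet T :=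
    (measurable_snd hA).inter (isClosed_le continuous_dist continuous_const).measurableSet
  have hS : MeasurableSet {p : E × E | p.1 + p.2 ∈ A} := (measurable_fst.add measurable_snd) hA
  have hshear : {p : E × E | p.1 + p.2 ∈ A} ∩ Set.univ ×ˢ closedBall 0 ρ =
      (fun p : E × E ↦ (p.1, p.1 + p.2)) ⁻¹' T := by
    ext p
    simp [T]
  calc μ.prod (ν.restrict (closedBall 0 ρ)) {p | p.1 + p.2 ∈ A}
      = μ.prod ν ((fun p : E × E ↦ (p.1, p.1 + p.2)) ⁻¹' T) := by
        conv_lhs => rw [← restrict_univ (μ := μ), prod_restrict, restrict_apply hS, hshear]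
    _ = μ.prod ν T := (measurePreserving_prod_add μ ν).measure_preimage hT.nullMeasurableSet
    _ = ∫⁻ y, A.indicator (fun y ↦ μ (closedBall y ρ)) y ∂ν := by
        rw [prod_apply_symm hT]
        refine lintegral_congr fun y ↦ ?_
        by_cases hy : y ∈ A <;> simp [T, hy, closedBall]
    _ = ∫⁻ y in A, μ (closedBall y ρ) ∂ν := lintegral_indicator hA _

theorem perturbed_point_density_general (d : ℕ) (ρ : ℝ)
    (A : Set (EuclideanSpace ℝ (Fin d))) (hA : MeasurableSet A) :
    (((ENNReal.ofReal ((d : ℝ) * kappa d))⁻¹ •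
          (μH[(d : ℝ) - 1] :
              Measure (EuclideanSpace ℝ (Fin d))).restrict
            (Metric.sphere (0 : EuclideanSpace ℝ (Fin d)) 1)).prod
        ((ENNReal.ofReal (kappa d * ρ ^ d))⁻¹ •
          volume.restrict (Metric.closedBall (0 : EuclideanSpace ℝ (Fin d)) ρ)))
        {p : EuclideanSpace ℝ (Fin d) × EuclideanSpace ℝ (Fin d) | p.1 + p.2 ∈ A} =
      (∫⁻ x in A,
          μH[(d : ℝ) - 1]
            (Metric.closedBall x ρ ∩ Metric.sphere (0 : EuclideanSpace ℝ (Fin d)) 1)) /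
        ENNReal.ofReal ((d : ℝ) * kappa d ^ 2 * ρ ^ d) := by
  have : IsFiniteMeasure ((μH[(d : ℝ) - 1] : Measure (EuclideanSpace ℝ (Fin d))).restrict
      (sphere 0 1)) := by
    have h := hausdorffMeasure_sphere_lt_top (E := EuclideanSpace ℝ (Fin d))
    rw [finrank_euclideanSpace_fin] at h
    exact isFiniteMeasure_restrict.mpr h.ne
  have hconst : (ENNReal.ofReal ((d : ℝ) * kappa d))⁻¹ * (ENNReal.ofReal (kappa d * ρ ^ d))⁻¹ =
      (ENNReal.ofReal ((d : ℝ) * kappa d ^ 2 * ρ ^ d))⁻¹ := by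
    rw [← ENNReal.mul_inv (.inr ENNReal.ofReal_ne_top) (.inl ENNReal.ofReal_ne_top),
      ← ENNReal.ofReal_mul (by unfold kappa; positivity)]
    ring_nf
  rw [prod_smul_left, prod_smul_right, smul_smul, Measure.smul_apply, smul_eq_mul,
    prod_restrict_closedBall_add_mem_eq_lintegral _ _ _ hA, hconst, div_eq_mul_inv, mul_comm]
  simp only [restrict_apply measurableSet_closedBall]

/-- the distribution of `X + e`, where `X` is uniform on the unit sphere and `e` is
an independent uniform point of the ball `B̄(0,ρ)`, has density
`x ↦ H^{d-1}(B̄(x,ρ) ∩ S^{d-1}) / (d κ_d² ρ^d)` with respect to Lebesgue measure. -/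
theorem perturbed_point_density (d : ℕ) (hd : 2 ≤ d) (ρ : ℝ) (hρ : 0 < ρ)
    (A : Set (EuclideanSpace ℝ (Fin d))) (hA : MeasurableSet A) :
    (((ENNReal.ofReal ((d : ℝ) * kappa d))⁻¹ •
          (μH[(d : ℝ) - 1] :
              Measure (EuclideanSpace ℝ (Fin d))).restrict
            (Metric.sphere (0 : EuclideanSpace ℝ (Fin d)) 1)).prod
        ((ENNReal.ofReal (kappa d * ρ ^ d))⁻¹ •
          volume.restrict (Metric.closedBall (0 : EuclideanSpace ℝ (Fin d)) ρ)))
        {p : EuclideanSpace ℝ (Fin d) × EuclideanSpace ℝ (Fin d) | p.1 + p.2 ∈ A} =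
      (∫⁻ x in A,
          μH[(d : ℝ) - 1]
            (Metric.closedBall x ρ ∩ Metric.sphere (0 : EuclideanSpace ℝ (Fin d)) 1)) /
        ENNReal.ofReal ((d : ℝ) * kappa d ^ 2 * ρ ^ d) :=
  perturbed_point_density_general d ρ A hA
end

section
/- Let d ≥ 2 be an integer and let α = −2/(d−1). For λ > 0 set u_λ = κ_d^{−1/(d+1)} λ^{1/(d−1)}. Then for every fixed h ≥ 0, lim_{λ → ∞} φ_{λ,α,u_λ}(h) = s₂( κ_d^{2/(d+1)} · h ). -/
open MeasureTheory Real Filter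

/-- The function `g_{λ,α,u}(h)`. -/
noncomputable def gfun (lam al u h : ℝ) : ℝ :=
  min (max ((lam ^ al / u ^ 2 * h - (1 / 2) * (1 + lam ^ al) / u ^ 4 * h ^ 2) /
      (1 - h / u ^ 2)) 0) 2

/-- The density `φ_{λ,α,u}(h)`. -/
noncomputable def phi (d : ℕ) (lam al u h : ℝ) : ℝ :=
  lam * (1 + lam ^ al) ^ d / u ^ (d + 1) / (kappa d * lam ^ ((d : ℝ) * al)) *
    s1 d (gfun lam al u h) * (1 - h / u ^ 2) ^ (d - 1)

/-- The function `s₂` : normalized surface area of the slice of the sphere at height `h`. -/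
noncomputable def s2 (d : ℕ) (h : ℝ) : ℝ :=
  if h ≤ 2 then kappa (d - 1) / ((d : ℝ) * kappa d) * (h * (2 - h)) ^ (((d : ℝ) - 1) / 2)
  else 0

open Set

lemma rpow_pow {x : ℝ} (hx : 0 ≤ x) (y : ℝ) (n : ℕ) : (x ^ y) ^ n = x ^ (y * n) := by
  rw [← Real.rpow_natCast (x^y) n, ← Real.rpow_mul hx]

-- arccos(1-g) → 0 within >0, as g → 0+
lemma arccos_tendsto : Tendsto (fun g : ℝ => Real.arccos (1-g)) (nhdsWithin 0 (Ioi 0)) (nhdsWithin 0 (Ioi 0)) := by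
  rw [tendsto_nhdsWithin_iff]
  constructor
  · have : Continuous (fun g : ℝ => Real.arccos (1-g)) :=
      Real.continuous_arccos.comp (by continuity)
    simpa [Real.arccos_one] using (this.tendsto 0).mono_left nhdsWithin_le_nhds
  · filter_upwards [self_mem_nhdsWithin] with g hg
    exact Real.arccos_pos.2 (by simp at hg ⊢; linarith)

-- sin x / x → 1
lemma sin_div_self_tendsto : Tendsto (fun x : ℝ => Real.sin x / x) (nhdsWithin 0 {0}ᶜ) (nhds 1) := by
  have := (hasDerivAt_iff_tendsto_slope).1 (Real.hasDerivAt_sin 0)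
  rw [Real.cos_zero] at this
  refine this.congr' ?_
  filter_upwards [self_mem_nhdsWithin] with x hx
  simp [slope_def_field, Real.sin_zero]

-- θ₀² / g → 2
lemma ratio_tendsto : Tendsto (fun g : ℝ => (Real.arccos (1-g))^2 / g) (nhdsWithin 0 (Ioi 0)) (nhds 2) := by
  have h1 : Tendsto (fun g : ℝ => Real.arccos (1-g) / 2) (nhdsWithin 0 (Ioi 0)) (nhdsWithin 0 {0}ᶜ) := by
    refine Tendsto.mono_right ?_ (nhdsWithin_mono 0 (s := Ioi (0:ℝ)) (fun x hx => ne_of_gt hx))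
    have ha := arccos_tendsto
    rw [tendsto_nhdsWithin_iff] at ha ⊢
    exact ⟨by simpa using ha.1.div_const 2,
      by filter_upwards [ha.2] with g hg; exact half_pos (Set.mem_Ioi.mp hg)⟩
  have h2 : Tendsto (fun g : ℝ => Real.sin (Real.arccos (1-g)/2) / (Real.arccos (1-g)/2))
      (nhdsWithin 0 (Ioi 0)) (nhds 1) := sin_div_self_tendsto.comp h1
  have h3 : Tendsto (fun g : ℝ => 2 * ((Real.sin (Real.arccos (1-g)/2) / (Real.arccos (1-g)/2)))⁻¹^2)
      (nhdsWithin 0 (Ioi 0)) (nhds 2) := by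
    have := ((h2.inv₀ one_ne_zero).pow 2).const_mul 2
    simpa using this
  refine h3.congr' ?_
  filter_upwards [self_mem_nhdsWithin, Ioo_mem_nhdsGT (by norm_num : (0:ℝ) < 2)] with g hg hg2
  obtain ⟨hg0, hg2'⟩ := hg2
  set θ := Real.arccos (1-g) with hθ
  have hθpos : 0 < θ := Real.arccos_pos.2 (by linarith)
  have hθle : θ ≤ π := Real.arccos_le_pi _
  have hsinpos : 0 < Real.sin (θ/2) := Real.sin_pos_of_pos_of_lt_pi (by linarith)
    (by linarith [Real.pi_pos])
  have hcos : Real.cos θ = 1 - g := Real.cos_arccos (by linarith) (by linarith)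
  have hg_eq : g = 2 * Real.sin (θ/2)^2 := by
    have := Real.sin_sq_eq_half_sub (θ/2)
    rw [show 2 * (θ/2) = θ by ring, hcos] at this
    linarith
  rw [hg_eq]
  field_simp

lemma cap_bounds (d : ℕ) (hd : 2 ≤ d) {g : ℝ} (hg0 : 0 < g) (hgδ : g < 1 - Real.cos 1) :
    (1 - Real.arccos (1-g)^2/4) ^ (d-2) * (Real.arccos (1-g)^(d-1) / ((d:ℝ)-1))
      ≤ (∫ x in (0:ℝ)..Real.arccos (1-g), Real.sin x ^ (d-2)) ∧
    (∫ x in (0:ℝ)..Real.arccos (1-g), Real.sin x ^ (d-2))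
      ≤ Real.arccos (1-g)^(d-1) / ((d:ℝ)-1) := by
  have hcos1 : Real.cos 1 ≤ 2/3 := by linarith [Real.cos_one_le]
  set θ := Real.arccos (1-g) with hθdef
  have hθpos : 0 < θ := Real.arccos_pos.2 (by linarith)
  have hθ1 : θ ≤ 1 := by
    have h1 : Real.arccos (1-g) ≤ Real.arccos (Real.cos 1) := by
      rw [Real.arccos_eq_pi_div_two_sub_arcsin, Real.arccos_eq_pi_div_two_sub_arcsin]
      have := Real.monotone_arcsin (le_of_lt (show Real.cos 1 < 1 - g by linarith))
      linarith
    rwa [Real.arccos_cos (by norm_num) (by linarith [Real.pi_gt_three])] at h1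
  have hint1 : IntervalIntegrable (fun x => Real.sin x ^ (d-2)) volume 0 θ :=
    (Real.continuous_sin.pow _).intervalIntegrable _ _
  have hintpow : ∫ x in (0:ℝ)..θ, x ^ (d-2) = θ^(d-1) / ((d:ℝ)-1) := by
    rw [integral_pow]
    have h1 : d - 2 + 1 = d - 1 := by omega
    have h2 : ((d-2:ℕ):ℝ) + 1 = (d:ℝ) - 1 := by
      rw [Nat.cast_sub (by omega)]; push_cast; ring
    rw [h1, h2, zero_pow (by omega : d - 1 ≠ 0), sub_zero]
  constructor
  · calc (1 - θ^2/4) ^ (d-2) * (θ^(d-1) / ((d:ℝ)-1))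
        = ∫ x in (0:ℝ)..θ, ((1-θ^2/4) * x) ^ (d-2) := by
          simp_rw [mul_pow]
          rw [intervalIntegral.integral_const_mul, hintpow]
      _ ≤ ∫ x in (0:ℝ)..θ, Real.sin x ^ (d-2) := by
          apply intervalIntegral.integral_mono_on hθpos.le
            (((continuous_const.mul continuous_id).pow _).intervalIntegrable _ _) hint1
          intro x hx
          have hθsq : θ^2 ≤ 1 := by nlinarith
          apply pow_le_pow_left₀ (mul_nonneg (by linarith) hx.1)
          rcases eq_or_lt_of_le hx.1 with h0 | h0
          · simp [← h0]
          · have hs := Real.sin_gt_sub_cube h0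
            have hxθ : x^2 ≤ θ^2 := by nlinarith [hx.2, h0]
            nlinarith [mul_le_mul_of_nonneg_right hxθ h0.le]
  · calc (∫ x in (0:ℝ)..θ, Real.sin x ^ (d-2))
        ≤ ∫ x in (0:ℝ)..θ, x ^ (d-2) := by
          apply intervalIntegral.integral_mono_on hθpos.le hint1
            ((continuous_id.pow _).intervalIntegrable _ _)
          intro x hx
          exact pow_le_pow_left₀ (Real.sin_nonneg_of_nonneg_of_le_pi hx.1
            (hx.2.trans (hθ1.trans (by linarith [Real.pi_gt_three])))) (Real.sin_le hx.1) _
      _ = θ^(d-1) / ((d:ℝ)-1) := hintpow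

lemma pow_div_rpow (d : ℕ) (hd : 2 ≤ d) {θ g : ℝ} (hθ : 0 ≤ θ) (hg0 : 0 < g) :
    θ^(d-1) / g ^ (((d:ℝ)-1)/2) = (θ^2/g) ^ (((d:ℝ)-1)/2) := by
  rw [Real.div_rpow (sq_nonneg θ) hg0.le]
  congr 1
  rw [← Real.rpow_natCast θ 2, ← Real.rpow_mul hθ, ← Real.rpow_natCast θ (d-1),
    Nat.cast_sub (by omega)]
  push_cast
  ring_nf

lemma F_asymp (d : ℕ) (hd : 2 ≤ d) :
    Tendsto (fun g : ℝ => (∫ θ in (0:ℝ)..Real.arccos (1-g), Real.sin θ ^ (d-2)) / g ^ (((d:ℝ)-1)/2))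
      (nhdsWithin 0 (Ioi 0)) (nhds (2 ^ (((d:ℝ)-1)/2) / ((d:ℝ)-1))) := by
  have hd1 : (1:ℝ) ≤ (d:ℝ) - 1 := by
    have : (2:ℝ) ≤ (d:ℝ) := by exact_mod_cast hd
    linarith
  set β : ℝ := ((d:ℝ)-1)/2 with hβ
  have hβ0 : 0 ≤ β := by positivity
  set θf : ℝ → ℝ := fun g => Real.arccos (1-g) with hθf
  have hθ0 : Tendsto θf (nhdsWithin 0 (Ioi 0)) (nhds 0) := arccos_tendsto.mono_right nhdsWithin_le_nhds
  have hhi : Tendsto (fun g => (θf g^2/g) ^ β / ((d:ℝ)-1)) (nhdsWithin 0 (Ioi 0))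
      (nhds (2 ^ β / ((d:ℝ)-1))) :=
    (ratio_tendsto.rpow_const (Or.inr hβ0)).div_const _
  have hfac : Tendsto (fun g => (1 - θf g^2/4) ^ (d-2)) (nhdsWithin 0 (Ioi 0)) (nhds 1) := by
    have : Tendsto (fun g => 1 - θf g^2/4) (nhdsWithin 0 (Ioi 0)) (nhds 1) := by
      have := ((hθ0.pow 2).div_const 4)
      simpa using (tendsto_const_nhds (x := (1:ℝ))).sub this
    simpa using this.pow (d-2)
  have hlo : Tendsto (fun g => (1 - θf g^2/4) ^ (d-2) * ((θf g^2/g) ^ β / ((d:ℝ)-1)))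
      (nhdsWithin 0 (Ioi 0)) (nhds (2 ^ β / ((d:ℝ)-1))) := by
    simpa using hfac.mul hhi
  have hev : ∀ᶠ g in nhdsWithin (0:ℝ) (Ioi 0), 0 < g ∧ g < 1 - Real.cos 1 := by
    have hpos : (0:ℝ) < 1 - Real.cos 1 := by linarith [Real.cos_one_le]
    filter_upwards [Ioo_mem_nhdsGT hpos] with g hg using ⟨hg.1, hg.2⟩
  refine tendsto_of_tendsto_of_tendsto_of_le_of_le' hlo hhi ?_ ?_ <;>
  · filter_upwards [hev] with g hg
    obtain ⟨hg0, hgδ⟩ := hg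
    have hb := cap_bounds d hd hg0 hgδ
    have hgpow : (0:ℝ) < g ^ β := Real.rpow_pos_of_pos hg0 β
    have hgood := pow_div_rpow d hd (Real.arccos_nonneg (1-g)) hg0
    first
    | calc (1 - θf g^2/4) ^ (d-2) * ((θf g^2/g) ^ β / ((d:ℝ)-1))
          = (1 - θf g^2/4) ^ (d-2) * (θf g^(d-1) / ((d:ℝ)-1)) / g ^ β := by
            rw [← hgood]; ring
        _ ≤ (∫ x in (0:ℝ)..θf g, Real.sin x ^ (d-2)) / g ^ β := by gcongr; exact hb.1
    | calc (∫ x in (0:ℝ)..θf g, Real.sin x ^ (d-2)) / g ^ β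
          ≤ (θf g^(d-1) / ((d:ℝ)-1)) / g ^ β := by gcongr; exact hb.2
        _ = (θf g^2/g) ^ β / ((d:ℝ)-1) := by rw [← hgood]; ring

/-- for `α = -2/(d-1)` and `u_λ = κ_d^{-1/(d+1)} λ^{1/(d-1)}`,
`φ_{λ,α,u_λ}(h) → s₂(κ_d^{2/(d+1)} h)` for every fixed `h ≥ 0`. -/
theorem phi_limit_critical_lower (d : ℕ) (hd : 2 ≤ d) (h : ℝ) (hh : 0 ≤ h) :
    Tendsto (fun lam : ℝ =>
        phi d lam (-2 / ((d : ℝ) - 1))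
          (kappa d ^ (-(1 : ℝ) / ((d : ℝ) + 1)) * lam ^ ((1 : ℝ) / ((d : ℝ) - 1))) h)
      atTop (nhds (s2 d (kappa d ^ ((2 : ℝ) / ((d : ℝ) + 1)) * h))) := by
  have hd2 : (2:ℝ) ≤ (d:ℝ) := by exact_mod_cast hd
  have hc : 0 < kappa d := kappa_pos d
  set c : ℝ := kappa d with hcdef
  set β : ℝ := (d:ℝ) - 1 with hβdef
  have hβ0 : (0:ℝ) < β := by rw [hβdef]; linarith
  set al : ℝ := -2 / β with haldef
  set t : ℝ := c ^ ((2:ℝ)/((d:ℝ)+1)) * h with htdef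
  have ht0 : 0 ≤ t := mul_nonneg (Real.rpow_pos_of_pos hc _).le hh
  -- case h = 0
  rcases eq_or_lt_of_le hh with h0 | hh0
  · have hzero : ∀ lam : ℝ, phi d lam al (c ^ (-(1:ℝ)/((d:ℝ)+1)) * lam ^ ((1:ℝ)/β)) h = 0 := by
      intro lam
      simp [phi, gfun, s1, ← h0, Real.arccos_one]
    have hs2 : s2 d t = 0 := by
      have : t = 0 := by rw [htdef, ← h0, mul_zero]
      rw [this, s2, if_pos (by norm_num)]
      rw [show (0:ℝ)*(2-0) = 0 by ring,
        Real.zero_rpow (ne_of_gt (by linarith : (0:ℝ) < ((d:ℝ)-1)/2)), mul_zero]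
    rw [hs2]
    simp only [hzero]
    exact tendsto_const_nhds
  · -- h > 0 case
    have ht0' : 0 < t := mul_pos (Real.rpow_pos_of_pos hc _) hh0
    have hβne : β ≠ 0 := ne_of_gt hβ0
    -- power identities
    have U_pow' : ∀ (n : ℕ) (lam a' b' : ℝ), 0 < lam →
        ((-(1:ℝ)/((d:ℝ)+1)) * n = a') → ((1:ℝ)/β * n = b') →
        (c ^ (-(1:ℝ)/((d:ℝ)+1)) * lam ^ ((1:ℝ)/β)) ^ n = c ^ a' * lam ^ b' := by
      intro n lam a' b' hl ha hb
      rw [mul_pow, rpow_pow hc.le, rpow_pow hl.le, ha, hb]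
    have fact1 : ∀ lam : ℝ, 0 < lam →
        h / (c ^ (-(1:ℝ)/((d:ℝ)+1)) * lam ^ ((1:ℝ)/β)) ^ 2 = t * lam ^ (-2/β) := by
      intro lam hl
      rw [U_pow' 2 lam (-((2:ℝ)/((d:ℝ)+1))) (2/β) hl (by push_cast; ring) (by push_cast; ring)]
      rw [htdef, Real.rpow_neg hc.le, show (-2/β : ℝ) = -(2/β) by ring, Real.rpow_neg hl.le]
      have h1 : (0:ℝ) < c ^ ((2:ℝ)/((d:ℝ)+1)) := Real.rpow_pos_of_pos hc _
      have h2 : (0:ℝ) < lam ^ ((2:ℝ)/β) := Real.rpow_pos_of_pos hl _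
      field_simp
    have hrpowadd : ∀ lam : ℝ, 0 < lam → lam ^ (-2/β) * lam ^ (-2/β) = lam ^ (-4/β) := by
      intro lam hl
      rw [← Real.rpow_add hl]; ring_nf
    have factNum : ∀ lam : ℝ, 0 < lam →
        lam ^ al / (c ^ (-(1:ℝ)/((d:ℝ)+1)) * lam ^ ((1:ℝ)/β)) ^ 2 * h
          - 1/2 * (1 + lam ^ al) / (c ^ (-(1:ℝ)/((d:ℝ)+1)) * lam ^ ((1:ℝ)/β)) ^ 4 * h ^ 2
        = (t - (1 + lam ^ al) * t ^ 2 / 2) * lam ^ (-4/β) := by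
      intro lam hl
      have hX := fact1 lam hl
      have step1 : lam ^ al / (c ^ (-(1:ℝ)/((d:ℝ)+1)) * lam ^ ((1:ℝ)/β)) ^ 2 * h
          - 1/2 * (1 + lam ^ al) / (c ^ (-(1:ℝ)/((d:ℝ)+1)) * lam ^ ((1:ℝ)/β)) ^ 4 * h ^ 2
          = lam ^ al * (t * lam ^ (-2/β)) - (1 + lam ^ al)/2 * (t * lam ^ (-2/β))^2 := by
        rw [← hX]; ring
      rw [step1, haldef]
      have hyz := hrpowadd lam hl
      linear_combination (t - (1 + lam ^ (-2/β)) * t ^ 2 / 2) * hyz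
    have factA : ∀ lam : ℝ, 0 < lam →
        lam * (1 + lam ^ al) ^ d / (c ^ (-(1:ℝ)/((d:ℝ)+1)) * lam ^ ((1:ℝ)/β)) ^ (d+1)
          / (c * lam ^ ((d:ℝ) * al)) = (1 + lam ^ al) ^ d * lam ^ 2 := by
      intro lam hl
      rw [U_pow' (d+1) lam (-1) (((d:ℝ)+1)/β) hl
        (by push_cast; field_simp)
        (by push_cast; ring)]
      have hcc : c ^ (-1:ℝ) * c = 1 := by
        rw [Real.rpow_neg_one]; exact inv_mul_cancel₀ hc.ne'
      have e2 : lam ^ (2:ℕ) * (lam ^ (((d:ℝ)+1)/β) * lam ^ ((d:ℝ)*al)) = lam := by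
        rw [← Real.rpow_natCast lam 2, ← Real.rpow_add hl, ← Real.rpow_add hl,
          show ((2:ℕ):ℝ) + (((d:ℝ)+1)/β + (d:ℝ)*al) = 1 by
            rw [haldef, hβdef]; push_cast; have hd1 : (d:ℝ) - 1 ≠ 0 := by linarith
            field_simp; ring,
          Real.rpow_one]
      rw [div_div, div_eq_iff (by positivity)]
      linear_combination (-((1 + lam ^ al) ^ d)) * e2
        - ((1 + lam ^ al) ^ d) * (lam ^ 2) * (lam ^ (((d:ℝ)+1)/β)) * (lam ^ ((d:ℝ)*al)) * hcc
    -- basic limits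
    have hneg2 : Tendsto (fun lam : ℝ => lam ^ (-2/β)) atTop (nhds 0) := by
      rw [show (-2/β : ℝ) = -(2/β) by ring]
      exact tendsto_rpow_neg_atTop (by positivity)
    have hneg4 : Tendsto (fun lam : ℝ => lam ^ (-4/β)) atTop (nhds 0) := by
      rw [show (-4/β : ℝ) = -(4/β) by ring]
      exact tendsto_rpow_neg_atTop (by positivity)
    have hal0 : Tendsto (fun lam : ℝ => lam ^ al) atTop (nhds 0) := by
      rw [haldef]; exact hneg2
    have hone : Tendsto (fun lam : ℝ => 1 + lam ^ al) atTop (nhds 1) := by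
      simpa using tendsto_const_nhds.add hal0
    have hP : Tendsto (fun lam : ℝ => (1 + lam ^ al) ^ d) atTop (nhds 1) := by
      simpa using hone.pow d
    have hD : Tendsto (fun lam : ℝ => 1 - t * lam ^ (-2/β)) atTop (nhds 1) := by
      simpa using tendsto_const_nhds.sub (hneg2.const_mul t)
    have hDpos : ∀ᶠ lam : ℝ in atTop, 0 < 1 - t * lam ^ (-2/β) :=
      hD.eventually (eventually_gt_nhds zero_lt_one)
    have hDpow : Tendsto (fun lam : ℝ => (1 - t * lam ^ (-2/β)) ^ (d-1)) atTop (nhds 1) := by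
      simpa using hD.pow (d-1)
    rcases lt_or_ge t 2 with ht2 | ht2
    · -- main subcase 0 < t < 2
      set m : ℝ := t * (2 - t) / 2 with hmdef
      have hm : 0 < m := by rw [hmdef]; nlinarith
      have hQ : Tendsto (fun lam : ℝ =>
          (t - (1 + lam ^ al) * t ^ 2 / 2) / (1 - t * lam ^ (-2/β))) atTop (nhds m) := by
        have hnum : Tendsto (fun lam : ℝ => t - (1 + lam ^ al) * t ^ 2 / 2) atTop
            (nhds (t - 1 * t ^ 2 / 2)) :=
          tendsto_const_nhds.sub ((hone.mul tendsto_const_nhds).div_const 2)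
        have := hnum.div hD one_ne_zero
        rwa [show (t - 1 * t ^ 2 / 2) / 1 = m by rw [hmdef]; ring] at this
      have hQpos : ∀ᶠ lam : ℝ in atTop,
          0 < (t - (1 + lam ^ al) * t ^ 2 / 2) / (1 - t * lam ^ (-2/β)) :=
        hQ.eventually (eventually_gt_nhds hm)
      have hGL0 : Tendsto (fun lam : ℝ =>
          (t - (1 + lam ^ al) * t ^ 2 / 2) / (1 - t * lam ^ (-2/β)) * lam ^ (-4/β))
          atTop (nhds 0) := by
        simpa using hQ.mul hneg4
      have hGLpos : ∀ᶠ lam : ℝ in atTop,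
          0 < (t - (1 + lam ^ al) * t ^ 2 / 2) / (1 - t * lam ^ (-2/β)) * lam ^ (-4/β) := by
        filter_upwards [hQpos, eventually_gt_atTop 0] with lam h1 h2
        exact mul_pos h1 (Real.rpow_pos_of_pos h2 _)
      have hGLlt2 : ∀ᶠ lam : ℝ in atTop,
          (t - (1 + lam ^ al) * t ^ 2 / 2) / (1 - t * lam ^ (-2/β)) * lam ^ (-4/β) < 2 :=
        hGL0.eventually (eventually_lt_nhds two_pos)
      have hGLin : Tendsto (fun lam : ℝ =>
          (t - (1 + lam ^ al) * t ^ 2 / 2) / (1 - t * lam ^ (-2/β)) * lam ^ (-4/β))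
          atTop (nhdsWithin 0 (Ioi 0)) := by
        rw [tendsto_nhdsWithin_iff]
        exact ⟨hGL0, hGLpos⟩
      have hF : Tendsto (fun lam : ℝ =>
          (∫ θ in (0:ℝ)..Real.arccos (1 -
            ((t - (1 + lam ^ al) * t ^ 2 / 2) / (1 - t * lam ^ (-2/β)) * lam ^ (-4/β))),
            Real.sin θ ^ (d-2)) /
          ((t - (1 + lam ^ al) * t ^ 2 / 2) / (1 - t * lam ^ (-2/β)) * lam ^ (-4/β))
            ^ (((d:ℝ)-1)/2)) atTop (nhds (2 ^ (((d:ℝ)-1)/2) / ((d:ℝ)-1))) := by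
        have := (F_asymp d hd).comp hGLin
        exact this
      have hQrpow : Tendsto (fun lam : ℝ =>
          ((t - (1 + lam ^ al) * t ^ 2 / 2) / (1 - t * lam ^ (-2/β))) ^ (((d:ℝ)-1)/2))
          atTop (nhds (m ^ (((d:ℝ)-1)/2))) :=
        hQ.rpow_const (Or.inl hm.ne')
      -- combined limit
      have hNICE : Tendsto (fun lam : ℝ =>
          ((d:ℝ)-1) * kappa (d-1) / ((d:ℝ) * c) *
          ((∫ θ in (0:ℝ)..Real.arccos (1 -
            ((t - (1 + lam ^ al) * t ^ 2 / 2) / (1 - t * lam ^ (-2/β)) * lam ^ (-4/β))),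
            Real.sin θ ^ (d-2)) /
          ((t - (1 + lam ^ al) * t ^ 2 / 2) / (1 - t * lam ^ (-2/β)) * lam ^ (-4/β))
            ^ (((d:ℝ)-1)/2)) *
          (1 + lam ^ al) ^ d *
          ((t - (1 + lam ^ al) * t ^ 2 / 2) / (1 - t * lam ^ (-2/β))) ^ (((d:ℝ)-1)/2) *
          (1 - t * lam ^ (-2/β)) ^ (d-1)) atTop
          (nhds (((d:ℝ)-1) * kappa (d-1) / ((d:ℝ) * c) * (2 ^ (((d:ℝ)-1)/2) / ((d:ℝ)-1)) * 1 *
            m ^ (((d:ℝ)-1)/2) * 1)) :=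
        ((((hF.const_mul _).mul hP).mul hQrpow).mul hDpow)
      have hlimval : ((d:ℝ)-1) * kappa (d-1) / ((d:ℝ) * c) * (2 ^ (((d:ℝ)-1)/2) / ((d:ℝ)-1)) * 1 *
            m ^ (((d:ℝ)-1)/2) * 1 = s2 d t := by
        rw [s2, if_pos ht2.le, ← hcdef]
        rw [show t * (2 - t) = 2 * m by rw [hmdef]; ring,
          Real.mul_rpow (by norm_num) hm.le]
        have hd1 : ((d:ℝ)-1) ≠ 0 := by linarith
        field_simp
      rw [← hlimval]
      refine Tendsto.congr' ?_ hNICE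
      filter_upwards [eventually_gt_atTop 0, hQpos, hGLlt2, hDpos] with lam hl0 hQp hGL2 hDp
      -- pointwise equality
      have hX := fact1 lam hl0
      have hNum := factNum lam hl0
      have hA := factA lam hl0
      have hGLrpow : ((t - (1 + lam ^ al) * t ^ 2 / 2) / (1 - t * lam ^ (-2/β)) * lam ^ (-4/β))
            ^ (((d:ℝ)-1)/2)
          = ((t - (1 + lam ^ al) * t ^ 2 / 2) / (1 - t * lam ^ (-2/β))) ^ (((d:ℝ)-1)/2)
            * (lam ^ 2)⁻¹ := by
        rw [Real.mul_rpow hQp.le (Real.rpow_pos_of_pos hl0 _).le,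
          ← Real.rpow_mul hl0.le,
          show (-4/β) * (((d:ℝ)-1)/2) = -((2:ℕ):ℝ) by rw [hβdef]; push_cast; have hd1 : (d:ℝ) - 1 ≠ 0 := (by linarith); field_simp; ring,
          Real.rpow_neg hl0.le, Real.rpow_natCast]
      have hQrp : (0:ℝ) < ((t - (1 + lam ^ al) * t ^ 2 / 2) / (1 - t * lam ^ (-2/β)))
          ^ (((d:ℝ)-1)/2) := Real.rpow_pos_of_pos hQp _
      have key : ∀ (C F P Qp Dd lm : ℝ), Qp ≠ 0 → lm ≠ 0 →
          C * (F / (Qp * (lm^2)⁻¹)) * P * Qp * Dd = P * lm^2 * (C * F) * Dd := by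
        intro C F P Qp Dd lm h1 h2
        field_simp
      simp only [phi, gfun]
      rw [hNum, hX,
        show (t - (1 + lam ^ al) * t ^ 2 / 2) * lam ^ (-4/β) / (1 - t * lam ^ (-2/β))
          = (t - (1 + lam ^ al) * t ^ 2 / 2) / (1 - t * lam ^ (-2/β)) * lam ^ (-4/β) by ring,
        max_eq_left (mul_pos hQp (Real.rpow_pos_of_pos hl0 _)).le, min_eq_left hGL2.le,
        ← hcdef, hA]
      simp only [s1]
      rw [if_pos hGL2.le, ← hcdef, hGLrpow]
      exact key _ _ _ _ _ _ hQrp.ne' (by positivity)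
    · -- subcase t ≥ 2 : everything vanishes
      have hs20 : s2 d t = 0 := by
        rcases eq_or_lt_of_le ht2 with heq | hlt
        · rw [s2, if_pos heq.symm.le, ← heq]
          rw [show (2:ℝ) * (2 - 2) = 0 by ring,
            Real.zero_rpow (ne_of_gt (by linarith : (0:ℝ) < ((d:ℝ)-1)/2)), mul_zero]
        · rw [s2, if_neg (not_le.mpr hlt)]
      rw [hs20]
      refine Tendsto.congr' ?_ tendsto_const_nhds
      filter_upwards [eventually_gt_atTop 0, hDpos] with lam hl0 hDp
      have hX := fact1 lam hl0
      have hNum := factNum lam hl0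
      have hgval : gfun lam al (c ^ (-(1:ℝ)/((d:ℝ)+1)) * lam ^ ((1:ℝ)/β)) h = 0 := by
        simp only [gfun]
        rw [hNum, hX]
        have hw : t - (1 + lam ^ al) * t ^ 2 / 2 ≤ 0 := by
          have : (0:ℝ) < lam ^ al := Real.rpow_pos_of_pos hl0 _
          nlinarith
        have : (t - (1 + lam ^ al) * t ^ 2 / 2) * lam ^ (-4/β) / (1 - t * lam ^ (-2/β)) ≤ 0 :=
          div_nonpos_of_nonpos_of_nonneg
            (mul_nonpos_of_nonpos_of_nonneg hw (Real.rpow_pos_of_pos hl0 _).le) hDp.le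
        rw [max_eq_right this, min_eq_left (by norm_num)]
      simp only [phi]
      rw [hgval]
      simp [s1, Real.arccos_one]
end

section
/- Let d ≥ 2 be an integer, u > 0, h₀ ≥ 0, h₁ ∈ ℝ, and v₁ ∈ ℝ^{d−1} with |v₁| ≤ u·π. If h₁ ≥ u²·(1 − cos(|v₁|/u)) + h₀·cos(|v₁|/u) (i.e., the point (v₁,h₁) lies in the quasi up-paraboloid with apex (0,h₀) and scale u), then |v₁| ≤ 2√2 · √(h₀ + h₁). -/
/-!
Write `θ = |v₁| / u ∈ [0, π]`. Jordan's inequality `cos θ ≤ 1 - 2θ²/π²` together with `π² ≤ 16`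
gives `|v₁|² = u²θ² ≤ 8 u² (1 - cos θ)`, and since `h₀ (1 + cos θ) ≥ 0` the membership condition
yields `u² (1 - cos θ) ≤ h₀ + h₁`.
-/

open Real

theorem Real.sq_le_eight_mul_one_sub_cos {θ : ℝ} (hθ : |θ| ≤ π) : θ ^ 2 ≤ 8 * (1 - cos θ) := by
  have hcos := cos_le_one_sub_mul_cos_sq hθ
  have hπ_sq : π ^ 2 ≤ 16 := by nlinarith [pi_pos, pi_le_four]
  have h_eighth : 1 / 8 ≤ 2 / π ^ 2 := by
    rw [div_le_div_iff₀ (by norm_num) (by positivity)]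
    linarith
  linarith [mul_le_mul_of_nonneg_right h_eighth (sq_nonneg θ)]

theorem sq_le_eight_mul_sq_mul_one_sub_cos_div {u r : ℝ} (hu : 0 < u) (hr : |r| ≤ u * π) :
    r ^ 2 ≤ 8 * (u ^ 2 * (1 - cos (r / u))) := by
  have hθ : |r / u| ≤ π := by
    rw [abs_div, abs_of_pos hu, div_le_iff₀' hu]
    exact hr
  calc r ^ 2 = u ^ 2 * (r / u) ^ 2 := by field_simp
    _ ≤ u ^ 2 * (8 * (1 - cos (r / u))) := by gcongr; exact sq_le_eight_mul_one_sub_cos hθ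
    _ = 8 * (u ^ 2 * (1 - cos (r / u))) := by ring

theorem sq_le_eight_mul_add_of_scale_mul_one_sub_cos_add_le {u r h₀ h₁ : ℝ} (hu : 0 < u)
    (hh₀ : 0 ≤ h₀) (hr : |r| ≤ u * π)
    (hmem : u ^ 2 * (1 - cos (r / u)) + h₀ * cos (r / u) ≤ h₁) :
    r ^ 2 ≤ 8 * (h₀ + h₁) := by
  have h_apex : 0 ≤ h₀ * (1 + cos (r / u)) :=
    mul_nonneg hh₀ (by linarith [neg_one_le_cos (r / u)])
  linarith [sq_le_eight_mul_sq_mul_one_sub_cos_div hu hr]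

theorem Real.sqrt_eight_mul (x : ℝ) : √(8 * x) = 2 * √2 * √x := by
  rw [show (8 : ℝ) = 2 ^ 2 * 2 by norm_num, sqrt_mul (by positivity), sqrt_mul (by positivity),
    sqrt_sq zero_le_two]

theorem quasi_up_paraboloid_diameter_general (d : ℕ) (u h₀ h₁ : ℝ)
    (hu : 0 < u) (hh₀ : 0 ≤ h₀) (v₁ : EuclideanSpace ℝ (Fin (d - 1)))
    (hv : ‖v₁‖ ≤ u * π)
    (hmem : u ^ 2 * (1 - Real.cos (‖v₁‖ / u)) + h₀ * Real.cos (‖v₁‖ / u) ≤ h₁) :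
    ‖v₁‖ ≤ 2 * Real.sqrt 2 * Real.sqrt (h₀ + h₁) := by
  have hsq : ‖v₁‖ ^ 2 ≤ 8 * (h₀ + h₁) :=
    sq_le_eight_mul_add_of_scale_mul_one_sub_cos_add_le hu hh₀ (by rwa [abs_norm]) hmem
  rw [← sqrt_eight_mul]
  simpa using abs_le_sqrt hsq

/-- Lemma 3.1 (i): if `(v₁, h₁)` lies in the quasi up-paraboloid with apex
`(0, h₀)` and scale `u`, then `|v₁| ≤ 2√2 √(h₀ + h₁)`. -/
theorem quasi_up_paraboloid_diameter (d : ℕ) (hd : 2 ≤ d) (u h₀ h₁ : ℝ)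
    (hu : 0 < u) (hh₀ : 0 ≤ h₀) (v₁ : EuclideanSpace ℝ (Fin (d - 1)))
    (hv : ‖v₁‖ ≤ u * π)
    (hmem : u ^ 2 * (1 - Real.cos (‖v₁‖ / u)) + h₀ * Real.cos (‖v₁‖ / u) ≤ h₁) :
    ‖v₁‖ ≤ 2 * Real.sqrt 2 * Real.sqrt (h₀ + h₁) :=
  quasi_up_paraboloid_diameter_general d u h₀ h₁ hu hh₀ v₁ hv hmem
end
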